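/- In max-score aggregation with i.i.d. K-category draws (Pr = p_k, all p_k > 0) and Gaussian scores N(μ_k, σ_k²): if σ_a > σ_b for two categories a ≠ b, then Pr(M̃_a^(N) ≤ M̃_b^(N)) → 0 as N → ∞. -/

import Mathlib

/-!
Take the threshold `t_N = μ_b + c √(log N)` with `c² = σ_a² + σ_b²`, which lies strictly between
`2σ_b²` and `2σ_a²`. If `M̃_a ≤ M̃_b`, then either no sample of category `a` exceeds `t_N` or some
sample of category `b` does. By independence the first event has probability
`(1 - p_a τ_a(t_N))^N ≤ exp (-N p_a τ_a(t_N))`, and by the union bound the second has probability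
at most `N p_b τ_b(t_N)`, where `τ_k` is the Gaussian tail. The Chernoff bound gives
`N τ_b(t_N) ≤ N ^ (1 - c² / 2σ_b²) → 0`, and bounding the density from below on `(t_N, t_N + 1]`
gives `N τ_a(t_N) ≳ exp (log N - (c √(log N) + O(1))² / 2σ_a²) → ∞`.
-/

open MeasureTheory ProbabilityTheory Real Finset Filter Classical

/-- Index family for joint independence of the category draws (left) and the Gaussian
scores (right), for an infinite sequence of samples. -/
def mixTypeSeq (K : ℕ) : ℕ ⊕ (Fin K × ℕ) → Type :=
  fun i => Sum.elim (fun _ => Fin K) (fun _ => ℝ) i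

noncomputable instance (K : ℕ) (i : ℕ ⊕ (Fin K × ℕ)) :
    MeasurableSpace (mixTypeSeq K i) := by
  cases i with
  | inl _ => exact inferInstanceAs (MeasurableSpace (Fin K))
  | inr _ => exact inferInstanceAs (MeasurableSpace ℝ)

open scoped ENNReal NNReal Topology

lemma gaussianReal_real_Ioi_add_le (m : ℝ) {v : ℝ≥0} (hv : v ≠ 0) {s : ℝ} (hs : 0 ≤ s) :
    (gaussianReal m v).real (Set.Ioi (m + s)) ≤ exp (-s ^ 2 / (2 * v)) := by
  have hv' : (0 : ℝ) < v := by positivity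
  -- Chernoff bound with the optimal parameter `s / v`
  have chernoff := measure_ge_le_exp_mul_mgf (X := id) (μ := gaussianReal m v) (m + s)
    (div_nonneg hs hv'.le) (integrable_exp_mul_gaussianReal _)
  rw [mgf_id_gaussianReal, ← exp_add] at chernoff
  calc (gaussianReal m v).real (Set.Ioi (m + s))
      ≤ (gaussianReal m v).real {x | m + s ≤ id x} :=
        measureReal_mono fun x (hx : m + s < x) => hx.le
    _ ≤ _ := chernoff
    _ = exp (-s ^ 2 / (2 * v)) := by congr 1; field_simp; ring

lemma gaussianPDFReal_add_one_le_gaussianReal_real_Ioi (m : ℝ) {v : ℝ≥0} (hv : v ≠ 0) {s : ℝ}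
    (hs : 0 ≤ s) : gaussianPDFReal m v (m + s + 1) ≤ (gaussianReal m v).real (Set.Ioi (m + s)) := by
  have hpdf : ∀ x ∈ Set.Ioc (m + s) (m + s + 1),
      gaussianPDFReal m v (m + s + 1) ≤ gaussianPDFReal m v x := by
    rintro x ⟨hx₁, hx₂⟩
    simp only [gaussianPDFReal]
    gcongr
    nlinarith
  calc gaussianPDFReal m v (m + s + 1)
      = ∫ _ in Set.Ioc (m + s) (m + s + 1), gaussianPDFReal m v (m + s + 1) := by simp
    _ ≤ ∫ x in Set.Ioc (m + s) (m + s + 1), gaussianPDFReal m v x :=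
        setIntegral_mono_on (integrableOn_const measure_Ioc_lt_top.ne)
          (integrable_gaussianPDFReal m v).integrableOn measurableSet_Ioc hpdf
    _ ≤ ∫ x in Set.Ioi (m + s), gaussianPDFReal m v x :=
        setIntegral_mono_set (integrable_gaussianPDFReal m v).integrableOn
          (ae_of_all _ (gaussianPDFReal_nonneg m v)) Set.Ioc_subset_Ioi_self.eventuallyLE
    _ = (gaussianReal m v).real (Set.Ioi (m + s)) := by
        rw [measureReal_def, gaussianReal_apply_eq_integral m hv,
          ENNReal.toReal_ofReal (setIntegral_nonneg measurableSet_Ioi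
            fun x _ => gaussianPDFReal_nonneg m v x)]

lemma tendsto_sq_sub_sq_div_atTop {c v : ℝ} (d : ℝ) (hv : 0 < v) (hc : c ^ 2 < 2 * v) :
    Tendsto (fun x : ℝ => x ^ 2 - (c * x + d) ^ 2 / (2 * v)) atTop atTop := by
  have hlead : 0 < 1 - c ^ 2 / (2 * v) := by rw [sub_pos, div_lt_one (by positivity)]; exact hc
  have hlin : Tendsto (fun x : ℝ => (1 - c ^ 2 / (2 * v)) * x + -(c * d / v)) atTop atTop :=
    tendsto_atTop_add_const_right _ _ (tendsto_id.const_mul_atTop hlead)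
  refine (tendsto_atTop_add_const_right _ (-(d ^ 2 / (2 * v)))
    (hlin.atTop_mul_atTop₀ tendsto_id)).congr fun x => ?_
  simp only [id]
  field_simp
  ring

lemma tendsto_sqrt_log_natCast_atTop : Tendsto (fun N : ℕ => √(log N)) atTop atTop :=
  tendsto_sqrt_atTop.comp (tendsto_log_atTop.comp tendsto_natCast_atTop_atTop)

lemma natCast_eq_exp_sq_sqrt_log {N : ℕ} (hN : 1 ≤ N) : (N : ℝ) = exp (√(log N) ^ 2) := by
  rw [sq_sqrt (log_nonneg (by exact_mod_cast hN)), exp_log (by positivity)]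

lemma tendsto_natCast_mul_gaussianReal_real_Ioi_atTop (m m' : ℝ) {v : ℝ≥0} (hv : v ≠ 0) {c : ℝ}
    (hc₀ : 0 < c) (hc : c ^ 2 < 2 * v) :
    Tendsto (fun N : ℕ => N * (gaussianReal m v).real (Set.Ioi (m' + c * √(log N))))
      atTop atTop := by
  have hexp : Tendsto (fun N : ℕ => (√(2 * π * v))⁻¹ *
      exp (√(log N) ^ 2 - (c * √(log N) + (m' - m + 1)) ^ 2 / (2 * v))) atTop atTop :=
    (tendsto_exp_atTop.comp ((tendsto_sq_sub_sq_div_atTop (m' - m + 1) (by positivity) hc).comp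
      tendsto_sqrt_log_natCast_atTop)).const_mul_atTop (by positivity)
  refine tendsto_atTop_mono' _ ?_ hexp
  filter_upwards [eventually_ge_atTop 1,
    (tendsto_sqrt_log_natCast_atTop.const_mul_atTop hc₀).eventually_ge_atTop (m - m')]
    with N hN hlarge
  have hN' := natCast_eq_exp_sq_sqrt_log hN
  have htail := gaussianPDFReal_add_one_le_gaussianReal_real_Ioi m hv
    (s := m' + c * √(log N) - m) (by linarith)
  rw [add_sub_cancel] at htail
  set x := √(log N)
  calc (√(2 * π * v))⁻¹ * exp (x ^ 2 - (c * x + (m' - m + 1)) ^ 2 / (2 * v))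
      = N * gaussianPDFReal m v (m' + c * x + 1) := by
        rw [gaussianPDFReal, hN', sub_eq_add_neg, exp_add, neg_div]
        ring_nf
    _ ≤ N * (gaussianReal m v).real (Set.Ioi (m' + c * √(log N))) := by gcongr

lemma tendsto_natCast_mul_gaussianReal_real_Ioi_zero (m : ℝ) {v : ℝ≥0} (hv : v ≠ 0) {c : ℝ}
    (hc₀ : 0 ≤ c) (hc : 2 * v < c ^ 2) :
    Tendsto (fun N : ℕ => N * (gaussianReal m v).real (Set.Ioi (m + c * √(log N))))
      atTop (𝓝 0) := by
  have hrate : 1 - c ^ 2 / (2 * v) < 0 := by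
    rw [sub_neg, one_lt_div (by positivity)]; exact hc
  have hexp : Tendsto (fun N : ℕ => exp ((1 - c ^ 2 / (2 * v)) * √(log N) ^ 2)) atTop (𝓝 0) :=
    tendsto_exp_atBot.comp (((tendsto_pow_atTop two_ne_zero).comp
      tendsto_sqrt_log_natCast_atTop).const_mul_atTop_of_neg hrate)
  refine squeeze_zero' (Eventually.of_forall fun N => by positivity) ?_ hexp
  filter_upwards [eventually_ge_atTop 1] with N hN
  have hN' := natCast_eq_exp_sq_sqrt_log hN
  set x := √(log N)
  calc (N : ℝ) * (gaussianReal m v).real (Set.Ioi (m + c * x))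
      ≤ N * exp (-(c * x) ^ 2 / (2 * v)) := by
        gcongr
        exact gaussianReal_real_Ioi_add_le m hv (by positivity)
    _ = exp ((1 - c ^ 2 / (2 * v)) * x ^ 2) := by
        rw [hN', ← exp_add]
        ring_nf

lemma one_sub_pow_le_exp_neg_mul {q : ℝ} (hq : q ≤ 1) (n : ℕ) : (1 - q) ^ n ≤ exp (-(n * q)) := by
  rw [← mul_neg, exp_nat_mul]
  exact pow_le_pow_left₀ (sub_nonneg.2 hq) (one_sub_le_exp_neg q) n

lemma measureReal_biInter_compl_of_iIndepSet {ι Ω : Type*} [MeasurableSpace Ω] {P : Measure Ω}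
    {E : ι → Set Ω} (hE : ∀ i, MeasurableSet (E i)) (hindep : iIndepSet E P) {q : ℝ}
    (hq : ∀ i, P.real (E i) = q) (s : Finset ι) :
    P.real (⋂ i ∈ s, (E i)ᶜ) = (1 - q) ^ s.card := by
  have := hindep.isProbabilityMeasure
  rw [measureReal_def, ((iIndepSet_iff_iIndep _ _).1 hindep).meas_biInter
    fun i _ => (MeasurableSpace.measurableSet_generateFrom (Set.mem_singleton _)).compl,
    ENNReal.toReal_prod]
  simp_rw [← measureReal_def, measureReal_compl (hE _), hq, probReal_univ]
  exact Finset.prod_const _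

lemma forall_le_or_exists_lt_of_sup_le {α : Type*} {s s' : Finset α} {f g : α → ℝ}
    (h : s.sup (fun u => (f u : WithBot ℝ)) ≤ s'.sup (fun u => (g u : WithBot ℝ))) (t : ℝ) :
    (∀ u ∈ s, f u ≤ t) ∨ ∃ u ∈ s', t < g u := by
  by_cases hg : s'.sup (fun u => (g u : WithBot ℝ)) ≤ t
  · exact Or.inl fun u hu => WithBot.coe_le_coe.1 ((Finset.le_sup hu).trans (h.trans hg))
  · simp only [Finset.sup_le_iff, not_forall, not_le, WithBot.coe_lt_coe] at hg
    obtain ⟨u, hu, hlt⟩ := hg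
    exact Or.inr ⟨u, hu, hlt⟩

section Sampling

variable {Ω : Type*} {K : ℕ}

def sampleFamily (C : ℕ → Ω → Fin K) (S : Fin K → ℕ → Ω → ℝ) (i : ℕ ⊕ (Fin K × ℕ)) :
    Ω → mixTypeSeq K i :=
  Sum.rec (motive := fun i => Ω → mixTypeSeq K i) (fun u => C u) (fun ku => S ku.1 ku.2) i

def exceedSet (C : ℕ → Ω → Fin K) (S : Fin K → ℕ → Ω → ℝ) (k : Fin K) (t : ℝ) (u : ℕ) :
    Set Ω :=
  C u ⁻¹' {k} ∩ S k u ⁻¹' Set.Ioi t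

def maxScore (C : ℕ → Ω → Fin K) (S : Fin K → ℕ → Ω → ℝ) (k : Fin K) (N : ℕ) (ω : Ω) :
    WithBot ℝ :=
  ((Finset.range N).filter fun u => C u ω = k).sup fun u => (S k u ω : WithBot ℝ)

lemma setOf_maxScore_le_subset (C : ℕ → Ω → Fin K) (S : Fin K → ℕ → Ω → ℝ) (a b : Fin K)
    (t : ℝ) (N : ℕ) :
    {ω | maxScore C S a N ω ≤ maxScore C S b N ω}
      ⊆ (⋂ u ∈ Finset.range N, (exceedSet C S a t u)ᶜ)
        ∪ ⋃ u ∈ Finset.range N, exceedSet C S b t u := by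
  intro ω hω
  rcases forall_le_or_exists_lt_of_sup_le hω t with hle | ⟨u, hu, hlt⟩
  · refine Or.inl (Set.mem_iInter₂.2 fun u hu ⟨(hC : C u ω = a), (hS : t < S a u ω)⟩ => ?_)
    exact (hle u (Finset.mem_filter.2 ⟨hu, hC⟩)).not_gt hS
  · rw [Finset.mem_filter] at hu
    exact Or.inr (Set.mem_iUnion₂.2 ⟨u, hu.1, hu.2, hlt⟩)

variable [MeasurableSpace Ω] {P : Measure Ω} {C : ℕ → Ω → Fin K} {S : Fin K → ℕ → Ω → ℝ}

lemma measurableSet_exceedSet (hC : ∀ u, Measurable (C u)) (hS : ∀ k u, Measurable (S k u))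
    (k : Fin K) (t : ℝ) (u : ℕ) : MeasurableSet (exceedSet C S k t u) :=
  (hC u (measurableSet_singleton k)).inter (hS k u measurableSet_Ioi)

lemma measure_biInter_exceedSet (hindep : iIndepFun (sampleFamily C S) P) (k : Fin K) (t : ℝ)
    (s : Finset ℕ) :
    P (⋂ u ∈ s, exceedSet C S k t u) = ∏ u ∈ s, P (C u ⁻¹' {k}) * P (S k u ⁻¹' Set.Ioi t) := by
  let sets : ∀ i, Set (mixTypeSeq K i) :=
    fun i => Sum.rec (motive := fun i => Set (mixTypeSeq K i)) (fun _ => {k})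
      (fun _ => (Set.Ioi t : Set ℝ)) i
  have hdisj : Disjoint (s.image Sum.inl) (s.image fun u => Sum.inr (k, u)) := by
    simp [Finset.disjoint_left]
  have hinter : ⋂ u ∈ s, exceedSet C S k t u
      = ⋂ i ∈ s.image Sum.inl ∪ s.image (fun u => Sum.inr (k, u)),
          sampleFamily C S i ⁻¹' sets i := by
    ext ω
    simp only [Set.mem_iInter, Finset.mem_union, Finset.mem_image]
    constructor
    · rintro h i (⟨u, hu, rfl⟩ | ⟨u, hu, rfl⟩)
      exacts [(h u hu).1, (h u hu).2]
    · intro h u hu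
      exact ⟨h (Sum.inl u) (Or.inl ⟨u, hu, rfl⟩), h (Sum.inr (k, u)) (Or.inr ⟨u, hu, rfl⟩)⟩
  rw [hinter, hindep.measure_inter_preimage_eq_mul _ fun i _ => ?_, Finset.prod_union hdisj,
    Finset.prod_image (fun _ _ _ _ h => Sum.inl_injective h),
    Finset.prod_image (fun _ _ _ _ h => by simpa using h), ← Finset.prod_mul_distrib]
  · rfl
  · cases i
    exacts [measurableSet_singleton k, (measurableSet_Ioi : MeasurableSet (Set.Ioi t))]

lemma iIndepSet_exceedSet (hC : ∀ u, Measurable (C u)) (hS : ∀ k u, Measurable (S k u))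
    (hindep : iIndepFun (sampleFamily C S) P) (k : Fin K) (t : ℝ) :
    iIndepSet (exceedSet C S k t) P := by
  refine (iIndepSet_iff_meas_biInter (measurableSet_exceedSet hC hS k t)).2 fun s => ?_
  rw [measure_biInter_exceedSet hindep]
  refine Finset.prod_congr rfl fun u _ => ?_
  simpa using (measure_biInter_exceedSet hindep k t {u}).symm

lemma measureReal_exceedSet {p μ σ : Fin K → ℝ} (hp : ∀ k, 0 ≤ p k)
    (hS : ∀ k u, Measurable (S k u))
    (hdist : ∀ u k, P {ω | C u ω = k} = ENNReal.ofReal (p k))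
    (hgauss : ∀ k u, P.map (S k u) = gaussianReal (μ k) (σ k ^ 2).toNNReal)
    (hindep : iIndepFun (sampleFamily C S) P) (k : Fin K) (t : ℝ) (u : ℕ) :
    P.real (exceedSet C S k t u)
      = p k * (gaussianReal (μ k) (σ k ^ 2).toNNReal).real (Set.Ioi t) := by
  have h := measure_biInter_exceedSet hindep k t {u}
  simp only [Finset.mem_singleton, Set.iInter_iInter_eq_left, Finset.prod_singleton] at h
  have hS' : P (S k u ⁻¹' Set.Ioi t) = gaussianReal (μ k) (σ k ^ 2).toNNReal (Set.Ioi t) := by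
    rw [← hgauss k u, Measure.map_apply (hS k u) measurableSet_Ioi]
  have hC : P (C u ⁻¹' {k}) = ENNReal.ofReal (p k) := hdist u k
  rw [measureReal_def, h, hC, hS', ENNReal.toReal_mul, ENNReal.toReal_ofReal (hp k),
    measureReal_def]

lemma measureReal_maxScore_le_le [IsProbabilityMeasure P] {p μ σ : Fin K → ℝ}
    (hp : ∀ k, 0 ≤ p k) (hC : ∀ u, Measurable (C u)) (hS : ∀ k u, Measurable (S k u))
    (hdist : ∀ u k, P {ω | C u ω = k} = ENNReal.ofReal (p k))
    (hgauss : ∀ k u, P.map (S k u) = gaussianReal (μ k) (σ k ^ 2).toNNReal)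
    (hindep : iIndepFun (sampleFamily C S) P) (a b : Fin K) (t : ℝ) (N : ℕ) :
    P.real {ω | maxScore C S a N ω ≤ maxScore C S b N ω}
      ≤ exp (-(N * (p a * (gaussianReal (μ a) (σ a ^ 2).toNNReal).real (Set.Ioi t))))
        + N * (p b * (gaussianReal (μ b) (σ b ^ 2).toNNReal).real (Set.Ioi t)) := by
  have hexceed := measureReal_exceedSet hp hS hdist hgauss hindep
  calc P.real {ω | maxScore C S a N ω ≤ maxScore C S b N ω}
      ≤ P.real ((⋂ u ∈ Finset.range N, (exceedSet C S a t u)ᶜ)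
          ∪ ⋃ u ∈ Finset.range N, exceedSet C S b t u) :=
        measureReal_mono (setOf_maxScore_le_subset C S a b t N)
    _ ≤ P.real (⋂ u ∈ Finset.range N, (exceedSet C S a t u)ᶜ)
          + ∑ u ∈ Finset.range N, P.real (exceedSet C S b t u) :=
        (measureReal_union_le _ _).trans (by gcongr; exact measureReal_biUnion_finset_le _ _)
    _ = (1 - p a * (gaussianReal (μ a) (σ a ^ 2).toNNReal).real (Set.Ioi t)) ^ N
          + N * (p b * (gaussianReal (μ b) (σ b ^ 2).toNNReal).real (Set.Ioi t)) := by
        rw [measureReal_biInter_compl_of_iIndepSet (measurableSet_exceedSet hC hS a t)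
          (iIndepSet_exceedSet hC hS hindep a t) (hexceed a t), Finset.card_range]
        simp [hexceed]
    _ ≤ _ := by
        gcongr
        exact one_sub_pow_le_exp_neg_mul (hexceed a t 0 ▸ measureReal_le_one) N

end Sampling

theorem stmt19_general {Ω : Type*} [MeasurableSpace Ω] (P : Measure Ω) [IsProbabilityMeasure P]
    (K : ℕ) (p μ σ : Fin K → ℝ) (hp : ∀ k, 0 < p k)
    (hσpos : ∀ k, 0 < σ k)
    (C : ℕ → Ω → Fin K) (hCmeas : ∀ u, Measurable (C u))
    (S : Fin K → ℕ → Ω → ℝ) (hSmeas : ∀ k u, Measurable (S k u))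
    (hdist : ∀ (u : ℕ) (k : Fin K), P {ω : Ω | C u ω = k} = ENNReal.ofReal (p k))
    (hgauss : ∀ (k : Fin K) (u : ℕ),
      Measure.map (S k u) P = gaussianReal (μ k) ((σ k ^ 2).toNNReal))
    (hindep : iIndepFun
      (fun i : ℕ ⊕ (Fin K × ℕ) =>
        Sum.rec (motive := fun i => Ω → mixTypeSeq K i)
          (fun u => C u) (fun ku => S ku.1 ku.2) i) P)
    (a b : Fin K) (hσ : σ b < σ a) :
    Tendsto (fun N : ℕ =>
        P {ω : Ω | ((Finset.range N).filter (fun u => C u ω = a)).sup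
              (fun u => ((S a u ω : ℝ) : WithBot ℝ))
            ≤ ((Finset.range N).filter (fun u => C u ω = b)).sup
              (fun u => ((S b u ω : ℝ) : WithBot ℝ))})
      atTop (nhds 0) := by
  have hvar : ∀ k, ((σ k ^ 2).toNNReal : ℝ) = σ k ^ 2 := fun k => coe_toNNReal _ (sq_nonneg _)
  have hvar₀ : ∀ k, (σ k ^ 2).toNNReal ≠ 0 := fun k => (toNNReal_pos.2 (pow_pos (hσpos k) 2)).ne'
  have hσsq : σ b ^ 2 < σ a ^ 2 := pow_lt_pow_left₀ hσ (hσpos b).le two_ne_zero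
  set c := √(σ a ^ 2 + σ b ^ 2)
  have hc₀ : 0 < c := sqrt_pos.2 (add_pos (pow_pos (hσpos a) 2) (pow_pos (hσpos b) 2))
  have hc : c ^ 2 = σ a ^ 2 + σ b ^ 2 := sq_sqrt (by positivity)
  set t := fun N : ℕ => μ b + c * √(log N)
  have hexceed_a : Tendsto (fun N : ℕ =>
      N * (p a * (gaussianReal (μ a) (σ a ^ 2).toNNReal).real (Set.Ioi (t N)))) atTop atTop :=
    ((tendsto_natCast_mul_gaussianReal_real_Ioi_atTop (μ a) (μ b) (hvar₀ a) hc₀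
      (by rw [hvar, hc]; linarith)).const_mul_atTop (hp a)).congr fun N => by ring
  have hexceed_b : Tendsto (fun N : ℕ =>
      N * (p b * (gaussianReal (μ b) (σ b ^ 2).toNNReal).real (Set.Ioi (t N)))) atTop (𝓝 0) := by
    simpa [mul_left_comm] using ((tendsto_natCast_mul_gaussianReal_real_Ioi_zero (μ b) (hvar₀ b)
      hc₀.le (by rw [hvar, hc]; linarith)).const_mul (p b))
  rw [← ENNReal.tendsto_toReal_zero_iff]
  refine squeeze_zero (fun N => ENNReal.toReal_nonneg)
    (fun N => measureReal_maxScore_le_le (fun k => (hp k).le) hCmeas hSmeas hdist hgauss hindep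
      a b (t N) N) ?_
  simpa using (tendsto_exp_atBot.comp (tendsto_neg_atTop_atBot.comp hexceed_a)).add hexceed_b

/-- In max-score aggregation with i.i.d. K-category draws (all p_k > 0) and Gaussian
scores N(μ_k, σ_k²): if σ_a > σ_b for two categories a ≠ b, then
Pr(M̃_a^(N) ≤ M̃_b^(N)) → 0 as N → ∞, where M̃_k^(N) is the maximum Gaussian score among
the first N samples landing in category k (−∞ if there is none). -/
theorem stmt19 {Ω : Type*} [MeasurableSpace Ω] (P : Measure Ω) [IsProbabilityMeasure P]
    (K : ℕ) (p μ σ : Fin K → ℝ) (hp : ∀ k, 0 < p k) (hsum : ∑ k, p k = 1)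
    (hσpos : ∀ k, 0 < σ k)
    (C : ℕ → Ω → Fin K) (hCmeas : ∀ u, Measurable (C u))
    (S : Fin K → ℕ → Ω → ℝ) (hSmeas : ∀ k u, Measurable (S k u))
    (hdist : ∀ (u : ℕ) (k : Fin K), P {ω : Ω | C u ω = k} = ENNReal.ofReal (p k))
    (hgauss : ∀ (k : Fin K) (u : ℕ),
      Measure.map (S k u) P = gaussianReal (μ k) ((σ k ^ 2).toNNReal))
    (hindep : iIndepFun
      (fun i : ℕ ⊕ (Fin K × ℕ) =>
        Sum.rec (motive := fun i => Ω → mixTypeSeq K i)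
          (fun u => C u) (fun ku => S ku.1 ku.2) i) P)
    (a b : Fin K) (hab : a ≠ b) (hσ : σ b < σ a) :
    Tendsto (fun N : ℕ =>
        P {ω : Ω | ((Finset.range N).filter (fun u => C u ω = a)).sup
              (fun u => ((S a u ω : ℝ) : WithBot ℝ))
            ≤ ((Finset.range N).filter (fun u => C u ω = b)).sup
              (fun u => ((S b u ω : ℝ) : WithBot ℝ))})
      atTop (nhds 0) :=
  stmt19_general P K p μ σ hp hσpos C hCmeas S hSmeas hdist hgauss hindep a b hσ
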